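/- If a Markov operator cocycle (P,σ) is asymptotically periodic with period r > 1, then (P,σ) is not posterior mixing for inhomogeneous observables in B(Ω, L^∞(X,m)). Specifically, with invariant density h_ω = (1/r)Σ_i g_i^ω and φ_ω = 1_{supp g_1^ω}, for every n the integral ∫_X P_ω^{(n)}(h_ω − g_1^ω) · φ_{σ^n ω} dm equals 1/r if ρ_ω^n(1) ≠ 1 and 1/r − 1 if ρ_ω^n(1) = 1; in particular it is bounded away from 0. -/

import Mathlib

open MeasureTheory Filter Topology

/-- The cocycle `P_ω^{(n)} = P_{σ^{n-1}ω} ∘ ⋯ ∘ P_ω` generated by a family of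
operators over the driving system `σ`. -/
noncomputable def coc {Ω M : Type*} [Monoid M] (P : Ω → M) (σ : Ω → Ω) : ℕ → Ω → M
  | 0, _ => 1
  | n + 1, ω => P (σ^[n] ω) * coc P σ n ω

/-!
Let `h = (1/r) Σ_i g_i` and `φ = 1_{supp g_{i₀}}`. The cocycle permutes the densities, so
`P_ω^{(n)} (h_ω - g_{i₀}^ω) = h_{σⁿω} - g_{ρ_ω^n i₀}^{σⁿω}`, whose pairing with `φ_{σⁿω}` is
`1/r - [ρ_ω^n i₀ = i₀]`, of absolute value at least `1/r` because `r ≥ 2`.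

Two approximations turn this into a counterexample. The map `ω ↦ φ_ω` need not be strongly
measurable, so the observable takes at `ω` the value of `φ` at the first member of a countable
dense set of density families that is `δ`-close to `(g_i^ω)_i`. The test function
`h_ω - g_{i₀}^ω` depends on `ω`, so it is replaced by the same expression at a nearby member of
that set. Markov operators are `L¹`-contractions, so both errors stay `O(δ)` uniformly in `n`.
-/

section Cocycle

variable {Ω M : Type*} [Monoid M] {P : Ω → M} {σ : Ω → Ω} {ω : Ω}

lemma coc_smul_eq_coc_perm {ι E : Type*} [MulAction M E] {g : ι → Ω → E}
    {ρ : Ω → Equiv.Perm ι}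
    (h : ∀ n i, P (σ^[n] ω) • g i (σ^[n] ω) = g (ρ (σ^[n] ω) i) (σ (σ^[n] ω)))
    (n : ℕ) (i : ι) : coc P σ n ω • g i ω = g (coc ρ σ n ω i) (σ^[n] ω) := by
  induction n generalizing i with
  | zero => simp [coc]
  | succ n ih =>
    rw [coc, coc, mul_smul, ih, h, Equiv.Perm.mul_apply, Function.iterate_succ_apply']

lemma norm_coc_smul_le {E : Type*} [Norm E] [MulAction M E]
    (h : ∀ n (u : E), ‖P (σ^[n] ω) • u‖ ≤ ‖u‖) (n : ℕ) (u : E) :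
    ‖coc P σ n ω • u‖ ≤ ‖u‖ := by
  induction n with
  | zero => simp [coc]
  | succ n ih => rw [coc, mul_smul]; exact (h n _).trans ih

end Cocycle

section Average

variable {ι E : Type*} [Fintype ι]

/-- With `v = (g_i)_i`, `avgSub v j` is `h - g_j` for the average `h` of the family. -/
noncomputable def avgSub [AddCommGroup E] [Module ℝ E] (v : ι → E) (j : ι) : E :=
  (Fintype.card ι : ℝ)⁻¹ • ∑ i, v i - v j

section Module

variable [AddCommGroup E] [Module ℝ E]

lemma map_avgSub {F 𝓕 : Type*} [AddCommGroup F] [Module ℝ F] [FunLike 𝓕 E F]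
    [LinearMapClass 𝓕 ℝ E F] (L : 𝓕) (v : ι → E) (j : ι) :
    L (avgSub v j) = avgSub (fun i => L (v i)) j := by
  simp [avgSub, map_sum]

lemma avgSub_comp_perm (v : ι → E) (π : Equiv.Perm ι) (j : ι) :
    avgSub (fun i => v (π i)) j = avgSub v (π j) := by
  simp only [avgSub, Equiv.sum_comp π v]

lemma avgSub_sub (v w : ι → E) (j : ι) : avgSub v j - avgSub w j = avgSub (v - w) j := by
  simp only [avgSub, Pi.sub_apply, Finset.sum_sub_distrib, smul_sub]
  abel

lemma avgSub_const (c : E) (j : ι) : avgSub (fun _ => c) j = 0 := by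
  have : Nonempty ι := ⟨j⟩
  have : (Fintype.card ι : ℝ) ≠ 0 := Nat.cast_ne_zero.2 Fintype.card_ne_zero
  simp [avgSub, Finset.card_univ, ← Nat.cast_smul_eq_nsmul ℝ, smul_smul, this]

end Module

lemma norm_avgSub_le [SeminormedAddCommGroup E] [NormedSpace ℝ E] (v : ι → E) (j : ι) :
    ‖avgSub v j‖ ≤ 2 * ‖v‖ := by
  have hsum : ‖∑ i, v i‖ ≤ Fintype.card ι * ‖v‖ := by
    simpa using norm_sum_le_of_le Finset.univ fun i _ => norm_le_pi_norm v i
  have hcard : (0 : ℝ) < Fintype.card ι := Nat.cast_pos.2 (Fintype.card_pos_iff.2 ⟨j⟩)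
  calc ‖avgSub v j‖ ≤ (Fintype.card ι : ℝ)⁻¹ * ‖∑ i, v i‖ + ‖v j‖ := by
        refine (norm_sub_le _ _).trans_eq ?_
        rw [norm_smul, Real.norm_of_nonneg (by positivity)]
    _ ≤ (Fintype.card ι : ℝ)⁻¹ * (Fintype.card ι * ‖v‖) + ‖v‖ := by
        gcongr; exact norm_le_pi_norm v j
    _ = 2 * ‖v‖ := by field_simp; ring

lemma dist_avgSub_le [SeminormedAddCommGroup E] [NormedSpace ℝ E] (v w : ι → E) (j : ι) :
    dist (avgSub v j) (avgSub w j) ≤ 2 * dist v w := by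
  simpa only [dist_eq_norm, avgSub_sub] using norm_avgSub_le (v - w) j

lemma inv_card_le_abs_avgSub_single [DecidableEq ι] (hι : 2 ≤ Fintype.card ι) (i j : ι) :
    (Fintype.card ι : ℝ)⁻¹ ≤ |avgSub (Pi.single i (1 : ℝ)) j| := by
  have hinv : (Fintype.card ι : ℝ)⁻¹ ≤ 2⁻¹ := by
    gcongr; exact_mod_cast hι
  have hpos : (0 : ℝ) < (Fintype.card ι : ℝ)⁻¹ := by positivity
  rcases eq_or_ne j i with rfl | hji
  · simp only [avgSub, Finset.sum_pi_single', Finset.mem_univ, if_true, smul_eq_mul, mul_one,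
      Pi.single_eq_same]
    rw [abs_of_neg (by linarith)]
    linarith
  · simp [avgSub, Pi.single_eq_of_ne hji, abs_of_pos hpos]

end Average

lemma coc_apply_avgSub {Ω ι E : Type*} [Fintype ι] [AddCommGroup E] [Module ℝ E]
    {P : Ω → Module.End ℝ E} {σ : Ω → Ω} {ω : Ω} {g : ι → Ω → E} {ρ : Ω → Equiv.Perm ι}
    (h : ∀ n i, P (σ^[n] ω) (g i (σ^[n] ω)) = g (ρ (σ^[n] ω) i) (σ (σ^[n] ω)))
    (n : ℕ) (j : ι) :
    coc P σ n ω (avgSub (fun i => g i ω) j) =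
      avgSub (fun i => g i (σ^[n] ω)) (coc ρ σ n ω j) := by
  rw [map_avgSub, ← avgSub_comp_perm]
  congr 1
  funext i
  exact coc_smul_eq_coc_perm (P := P) (g := g) h n i

section L1

variable {X : Type*} [MeasurableSpace X] {m : Measure X}

lemma MeasureTheory.L1.norm_eq_integral_of_nonneg {v : Lp ℝ 1 m} (hv : 0 ≤ v) :
    ‖v‖ = ∫ x, v x ∂m := by
  rw [L1.norm_eq_integral_norm]
  refine integral_congr_ae ?_
  filter_upwards [(Lp.coeFn_nonneg _).2 hv] with x hx
  exact Real.norm_of_nonneg hx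

def IsMarkovOperator (Q : Module.End ℝ (Lp ℝ 1 m)) : Prop :=
  (∀ f, 0 ≤ f → 0 ≤ Q f) ∧ ∀ f, ∫ x, Q f x ∂m = ∫ x, f x ∂m

lemma IsMarkovOperator.norm_apply_le {Q : Module.End ℝ (Lp ℝ 1 m)} (hQ : IsMarkovOperator Q)
    (u : Lp ℝ 1 m) : ‖Q u‖ ≤ ‖u‖ := by
  have hnorm : ∀ f : Lp ℝ 1 m, 0 ≤ f → ‖Q f‖ = ‖f‖ := fun f hf => by
    rw [L1.norm_eq_integral_of_nonneg (hQ.1 f hf), hQ.2, L1.norm_eq_integral_of_nonneg hf]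
  have hsplit : ‖u‖ = ‖u⁺‖ + ‖u⁻‖ := by
    rw [← norm_abs_eq_norm u, ← posPart_add_negPart u,
      L1.norm_eq_integral_of_nonneg (add_nonneg (posPart_nonneg u) (negPart_nonneg u)),
      L1.norm_eq_integral_of_nonneg (posPart_nonneg u),
      L1.norm_eq_integral_of_nonneg (negPart_nonneg u),
      ← integral_add (L1.integrable_coeFn _) (L1.integrable_coeFn _)]
    exact integral_congr_ae (Lp.coeFn_add _ _)
  calc ‖Q u‖ = ‖Q u⁺ - Q u⁻‖ := by rw [← map_sub, posPart_sub_negPart]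
    _ ≤ ‖Q u⁺‖ + ‖Q u⁻‖ := norm_sub_le _ _
    _ = ‖u‖ := by rw [hnorm _ (posPart_nonneg u), hnorm _ (negPart_nonneg u), hsplit]

lemma integral_avgSub_eq_zero {ι : Type*} [Fintype ι] {v : ι → Lp ℝ 1 m}
    (hv : ∀ i, ∫ x, v i x ∂m = 1) (j : ι) : ∫ x, avgSub v j x ∂m = 0 := by
  have h := map_avgSub (L1.integralCLM (μ := m) (E := ℝ)) v j
  simp only [← L1.integral_eq, L1.integral_eq_integral, hv] at h
  rw [h, avgSub_const]

variable (m) in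
noncomputable def l1LinftyPairing : Lp ℝ 1 m →L[ℝ] Lp ℝ ⊤ m →L[ℝ] ℝ :=
  (ContinuousLinearMap.mul ℝ ℝ).lpPairing m 1 ⊤

lemma l1LinftyPairing_apply (u : Lp ℝ 1 m) (φ : Lp ℝ ⊤ m) :
    l1LinftyPairing m u φ = ∫ x, u x * φ x ∂m :=
  (ContinuousLinearMap.mul ℝ ℝ).lpPairing_eq_integral u φ

lemma abs_l1LinftyPairing_le (u : Lp ℝ 1 m) (φ : Lp ℝ ⊤ m) :
    |l1LinftyPairing m u φ| ≤ ‖u‖ * ‖φ‖ := by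
  have h : l1LinftyPairing m u φ = L1.integral ((ContinuousLinearMap.mul ℝ ℝ).holder 1 u φ) := by
    rw [L1.integral_eq' ℝ]; rfl
  rw [h, ← Real.norm_eq_abs]
  calc _ ≤ _ := L1.norm_integral_le _
    _ ≤ ‖ContinuousLinearMap.mul ℝ ℝ‖ * ‖u‖ * ‖φ‖ :=
        ContinuousLinearMap.norm_holder_apply_apply_le _ _ _
    _ ≤ 1 * ‖u‖ * ‖φ‖ := by gcongr; exact ContinuousLinearMap.opNorm_mul_le ℝ ℝ
    _ = ‖u‖ * ‖φ‖ := by rw [one_mul]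

lemma lipschitzWith_one_l1LinftyPairing_coc {Ω : Type*} {P : Ω → Module.End ℝ (Lp ℝ 1 m)}
    {σ : Ω → Ω} {ω : Ω} (hP : ∀ n, IsMarkovOperator (P (σ^[n] ω))) {φ : Lp ℝ ⊤ m}
    (hφ : ‖φ‖ ≤ 1) (n : ℕ) : LipschitzWith 1 fun u => l1LinftyPairing m (coc P σ n ω u) φ := by
  have hstep : ∀ k (u : Lp ℝ 1 m), ‖P (σ^[k] ω) • u‖ ≤ ‖u‖ := fun k => (hP k).norm_apply_le
  have hcontr : ∀ u : Lp ℝ 1 m, ‖coc P σ n ω u‖ ≤ ‖u‖ := norm_coc_smul_le hstep n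
  refine LipschitzWith.of_dist_le_mul fun u v => ?_
  rw [Real.dist_eq, ← sub_apply, ← map_sub, ← map_sub, NNReal.coe_one, one_mul, dist_eq_norm]
  calc _ ≤ ‖coc P σ n ω (u - v)‖ * ‖φ‖ := abs_l1LinftyPairing_le _ _
    _ ≤ ‖u - v‖ * 1 := by gcongr; exact hcontr _
    _ = ‖u - v‖ := mul_one _

end L1

section Densities

variable {X : Type*} [MeasurableSpace X] {m : Measure X}

def IsDisjointDensities {ι : Type*} (v : ι → Lp ℝ 1 m) : Prop :=
  (∀ i, 0 ≤ v i ∧ ∫ x, v i x ∂m = 1) ∧ ∀ i j, i ≠ j → v i ⊓ v j = 0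

variable [IsFiniteMeasure m]

noncomputable def supportIndicator (u : Lp ℝ 1 m) : Lp ℝ ⊤ m :=
  indicatorConstLp ⊤ (s := {x | 0 < u x})
    (measurableSet_lt measurable_const (Lp.stronglyMeasurable u).measurable)
    (measure_ne_top m _) 1

lemma norm_supportIndicator_le (u : Lp ℝ 1 m) : ‖supportIndicator u‖ ≤ 1 :=
  norm_indicatorConstLp_le.trans (by simp)

lemma coeFn_supportIndicator (u : Lp ℝ 1 m) :
    supportIndicator u =ᵐ[m] {x | 0 < u x}.indicator fun _ => 1 :=
  indicatorConstLp_coeFn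

lemma l1LinftyPairing_supportIndicator_self {u : Lp ℝ 1 m} (hu : 0 ≤ u) :
    l1LinftyPairing m u (supportIndicator u) = ∫ x, u x ∂m := by
  rw [l1LinftyPairing_apply]
  refine integral_congr_ae ?_
  filter_upwards [coeFn_supportIndicator u, (Lp.coeFn_nonneg _).2 hu] with x hφ hux
  rw [hφ]
  rcases (hux : 0 ≤ u x).lt_or_eq with hpos | hzero
  · simp [Set.indicator_of_mem (show x ∈ {x | 0 < u x} from hpos)]
  · simp [← hzero]

lemma l1LinftyPairing_supportIndicator_of_inf_eq_zero {u v : Lp ℝ 1 m} (hv : 0 ≤ v)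
    (huv : u ⊓ v = 0) : l1LinftyPairing m v (supportIndicator u) = 0 := by
  rw [l1LinftyPairing_apply, ← integral_zero X ℝ]
  refine integral_congr_ae ?_
  have hmin : ⇑(u ⊓ v) =ᵐ[m] 0 := huv ▸ Lp.coeFn_zero _ _ _
  filter_upwards [coeFn_supportIndicator u, (Lp.coeFn_nonneg _).2 hv, Lp.coeFn_inf u v, hmin]
    with x hφ hvx hinf hmin
  rw [hφ]
  by_cases hux : 0 < u x
  · have : min (u x) (v x) = 0 := by simpa [hinf] using hmin
    have hvx0 : v x = 0 := by
      rcases min_eq_iff.1 this with ⟨h, -⟩ | ⟨h, -⟩ <;> [linarith; exact h]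
    simp [hvx0]
  · simp [Set.indicator_of_notMem (show x ∉ {x | 0 < u x} from hux)]

lemma IsDisjointDensities.l1LinftyPairing_supportIndicator {ι : Type*} [DecidableEq ι]
    {v : ι → Lp ℝ 1 m} (hv : IsDisjointDensities v) (i : ι) :
    (fun j => l1LinftyPairing m (v j) (supportIndicator (v i))) = Pi.single i 1 := by
  funext j
  rcases eq_or_ne j i with rfl | hji
  · rw [Pi.single_eq_same, l1LinftyPairing_supportIndicator_self (hv.1 j).1, (hv.1 j).2]
  · rw [Pi.single_eq_of_ne hji,
      l1LinftyPairing_supportIndicator_of_inf_eq_zero (hv.1 j).1 (hv.2 i j hji.symm)]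

lemma IsDisjointDensities.inv_card_sub_le_abs_l1LinftyPairing {ι : Type*} [Fintype ι]
    (hι : 2 ≤ Fintype.card ι) {v : ι → Lp ℝ 1 m} (hv : IsDisjointDensities v)
    (u : ι → Lp ℝ 1 m) (i j : ι) :
    (Fintype.card ι : ℝ)⁻¹ - 2 * dist u v ≤
      |l1LinftyPairing m (avgSub u j) (supportIndicator (v i))| := by
  classical
  set φ := supportIndicator (v i)
  have hexact : l1LinftyPairing m (avgSub v j) φ = avgSub (Pi.single i (1 : ℝ)) j := by
    rw [← hv.l1LinftyPairing_supportIndicator i]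
    exact map_avgSub ((l1LinftyPairing m).flip φ) v j
  have hclose : |l1LinftyPairing m (avgSub u j) φ - l1LinftyPairing m (avgSub v j) φ|
      ≤ 2 * dist u v := by
    rw [← sub_apply, ← map_sub]
    calc _ ≤ ‖avgSub u j - avgSub v j‖ * ‖φ‖ := abs_l1LinftyPairing_le _ _
      _ ≤ 2 * dist u v * 1 := by
          gcongr
          · rw [← dist_eq_norm]; exact dist_avgSub_le u v j
          · exact norm_supportIndicator_le _
      _ = 2 * dist u v := mul_one _
  have hfar : (Fintype.card ι : ℝ)⁻¹ ≤ |l1LinftyPairing m (avgSub v j) φ| :=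
    hexact ▸ inv_card_le_abs_avgSub_single hι i j
  linarith [abs_sub_abs_le_abs_sub (l1LinftyPairing m (avgSub v j) φ)
    (l1LinftyPairing m (avgSub u j) φ), abs_sub_comm (l1LinftyPairing m (avgSub u j) φ)
    (l1LinftyPairing m (avgSub v j) φ)]

lemma inv_card_sub_le_abs_l1LinftyPairing_coc_avgSub {Ω ι : Type*} [Fintype ι]
    (hι : 2 ≤ Fintype.card ι) {P : Ω → Module.End ℝ (Lp ℝ 1 m)} {σ : Ω → Ω} {ω : Ω}
    {g : ι → Ω → Lp ℝ 1 m} {ρ : Ω → Equiv.Perm ι}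
    (hperm : ∀ n i, P (σ^[n] ω) (g i (σ^[n] ω)) = g (ρ (σ^[n] ω) i) (σ (σ^[n] ω)))
    {v : ι → Lp ℝ 1 m} (hv : IsDisjointDensities v) (n : ℕ) (i : ι) :
    (Fintype.card ι : ℝ)⁻¹ - 2 * dist (fun j => g j (σ^[n] ω)) v ≤
      |l1LinftyPairing m (coc P σ n ω (avgSub (fun j => g j ω) i)) (supportIndicator (v i))| := by
  rw [coc_apply_avgSub hperm]
  exact hv.inv_card_sub_le_abs_l1LinftyPairing hι _ i _

end Densities

section Selection

lemma TopologicalSpace.IsSeparable.exists_seq_mem_dense {α : Type*} [TopologicalSpace α]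
    [TopologicalSpace.PseudoMetrizableSpace α] {s : Set α}
    (hs : TopologicalSpace.IsSeparable s) (hne : s.Nonempty) :
    ∃ e : ℕ → α, (∀ k, e k ∈ s) ∧ s ⊆ closure (Set.range e) := by
  obtain ⟨t, hts, htc, hst⟩ := hs.exists_countable_dense_subset
  have htne : t.Nonempty := by
    by_contra ht
    obtain ⟨x, hx⟩ := hne
    simpa [Set.not_nonempty_iff_eq_empty.1 ht] using hst hx
  obtain ⟨e, rfl⟩ := htc.exists_eq_range htne
  exact ⟨e, fun k => hts (Set.mem_range_self k), hst⟩

lemma isSeparable_range_pi_of_stronglyMeasurable {Ω ι E : Type*} [MeasurableSpace Ω]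
    [Countable ι] [TopologicalSpace E] {g : ι → Ω → E} (hg : ∀ i, StronglyMeasurable (g i)) :
    TopologicalSpace.IsSeparable (Set.range fun ω i => g i ω) :=
  (TopologicalSpace.IsSeparable.univ_pi fun i => (hg i).isSeparable_range).mono <| by
    rintro _ ⟨ω, rfl⟩ i -
    exact ⟨ω, rfl⟩

lemma exists_measurable_mem_of_mem_iUnion {Ω : Type*} [MeasurableSpace Ω] {D : ℕ → Set Ω}
    (hD : ∀ k, MeasurableSet (D k)) :
    ∃ s : Ω → ℕ, Measurable s ∧ ∀ ω ∈ ⋃ k, D k, ω ∈ D (s ω) := by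
  classical
  have hex : ∀ ω, ∃ k, ω ∈ D k ∨ ω ∉ ⋃ k, D k := fun ω => by
    by_cases hω : ω ∈ ⋃ k, D k
    · obtain ⟨k, hk⟩ := Set.mem_iUnion.1 hω
      exact ⟨k, Or.inl hk⟩
    · exact ⟨0, Or.inr hω⟩
  refine ⟨fun ω => Nat.find (hex ω),
    measurable_find hex fun k => (hD k).union (MeasurableSet.iUnion hD).compl, fun ω hω => ?_⟩
  exact (Nat.find_spec (hex ω)).resolve_right (not_not.2 hω)

lemma exists_measurable_index_dist_lt {Ω ι E : Type*} [MeasurableSpace Ω] [Fintype ι]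
    [PseudoMetricSpace E] {g : ι → Ω → E} (hg : ∀ i, StronglyMeasurable (g i))
    (e : ℕ → ι → E) {δ : ℝ} (hδ : 0 < δ) :
    ∃ s : Ω → ℕ, Measurable s ∧
      ∀ ω, (fun i => g i ω) ∈ closure (Set.range e) → dist (fun i => g i ω) (e (s ω)) < δ := by
  have hD : ∀ k, MeasurableSet {ω | dist (fun i => g i ω) (e k) < δ} := fun k => by
    simp only [dist_pi_lt_iff hδ, Set.ofPred_forall]
    exact MeasurableSet.iInter fun i => measurableSet_lt
      ((continuous_id.dist continuous_const).comp_stronglyMeasurable (hg i)).measurable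
      measurable_const
  obtain ⟨s, hs, hsD⟩ := exists_measurable_mem_of_mem_iUnion hD
  refine ⟨s, hs, fun ω hω => hsD ω ?_⟩
  obtain ⟨k, hk⟩ := Metric.mem_closure_range_iff.1 hω δ hδ
  exact Set.mem_iUnion.2 ⟨k, hk⟩

end Selection

lemma MeasureTheory.MeasurePreserving.ae_forall_iterate {Ω : Type*} [MeasurableSpace Ω]
    {μ : Measure Ω} {σ : Ω → Ω} (hσ : MeasurePreserving σ μ μ) {p : Ω → Prop}
    (hp : ∀ᵐ ω ∂μ, p ω) : ∀ᵐ ω ∂μ, ∀ n, p (σ^[n] ω) :=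
  ae_all_iff.2 fun n => (hσ.iterate n).quasiMeasurePreserving.ae hp

lemma not_tendsto_zero_of_le_abs {E : Type*} [PseudoMetricSpace E] {Λ : ℕ → E → ℝ}
    (hΛ : ∀ n, LipschitzWith 1 (Λ n)) {u f : E} {c : ℝ} (hu : ∀ n, c ≤ |Λ n u|)
    (hf : dist u f < c) : ¬Tendsto (fun n => Λ n f) atTop (𝓝 0) := fun hlim => by
  obtain ⟨n, hn⟩ := (hlim.eventually (Metric.ball_mem_nhds 0 (sub_pos.2 hf))).exists
  have hlip : dist (Λ n u) (Λ n f) ≤ dist u f := by simpa using (hΛ n).dist_le_mul u f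
  rw [Real.dist_0_eq_abs] at hn
  rw [Real.dist_eq] at hlip
  linarith [hu n, abs_sub_abs_le_abs_sub (Λ n u) (Λ n f)]

theorem asymptotically_periodic_not_posterior_mixing_of_period_gt_one_general
    {X : Type*} [MeasurableSpace X] (m : Measure X) [IsProbabilityMeasure m]
    {Ω : Type*} [MeasurableSpace Ω] (Pr : Measure Ω) [IsProbabilityMeasure Pr]
    (σ : Ω → Ω) (hσ : MeasurePreserving σ Pr Pr)
    (P : Ω → Module.End ℝ (Lp ℝ 1 m))
    (hP : ∀ᵐ ω ∂Pr, (∀ f : Lp ℝ 1 m, 0 ≤ f → 0 ≤ P ω f) ∧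
      ∀ f : Lp ℝ 1 m, ∫ x, (P ω f) x ∂m = ∫ x, f x ∂m)
    (r : ℕ) (hr : 1 < r)
    (g : Fin r → Ω → Lp ℝ 1 m)
    (ρ : Ω → Equiv.Perm (Fin r))
    (hgmeas : ∀ i, StronglyMeasurable (g i))
    (hdens : ∀ᵐ ω ∂Pr, ∀ i, 0 ≤ g i ω ∧ ∫ x, (g i ω) x ∂m = 1)
    (hdisj : ∀ᵐ ω ∂Pr, ∀ i j, i ≠ j → g i ω ⊓ g j ω = 0)
    (hperm : ∀ᵐ ω ∂Pr, ∀ i, P ω (g i ω) = g (ρ ω i) (σ ω)) :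
    ¬ (∀ (f : Lp ℝ 1 m), ∫ x, f x ∂m = 0 →
        ∀ (G : Ω → Lp ℝ ⊤ m), StronglyMeasurable G → (∃ C : ℝ, ∀ ω, ‖G ω‖ ≤ C) →
          ∀ᵐ ω ∂Pr,
            Tendsto (fun n => ∫ x, (coc P σ n ω f) x * (G (σ^[n] ω)) x ∂m)
              atTop (𝓝 0)) := by
  intro hmix
  set T : Ω → Fin r → Lp ℝ 1 m := fun ω i => g i ω
  set i₀ : Fin r := ⟨0, by omega⟩
  set δ : ℝ := (4 * r)⁻¹ with hδ
  have hgood := hσ.ae_forall_iterate (hP.and ((hdens.and hdisj).and hperm))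
  obtain ⟨ω₀, hω₀⟩ := hgood.exists
  obtain ⟨e, heS, hSe⟩ := ((isSeparable_range_pi_of_stronglyMeasurable hgmeas).mono
    Set.inter_subset_left).exists_seq_mem_dense (s := Set.range T ∩ {v | IsDisjointDensities v})
    ⟨T ω₀, ⟨ω₀, rfl⟩, (hω₀ 0).2.1⟩
  obtain ⟨s, hs, hsδ⟩ := exists_measurable_index_dist_lt hgmeas e (by positivity : 0 < δ)
  set G : Ω → Lp ℝ ⊤ m := fun ω => supportIndicator (e (s ω) i₀)
  have hGmeas : StronglyMeasurable G :=
    (continuous_of_discreteTopology (f := fun k => supportIndicator (e k i₀)))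
      |>.comp_stronglyMeasurable hs.stronglyMeasurable
  have hmix' := ae_all_iff.2 fun k => hmix (avgSub (e k) i₀)
    (integral_avgSub_eq_zero (fun i => ((heS k).2.1 i).2) i₀) G hGmeas
    ⟨1, fun ω => norm_supportIndicator_le _⟩
  obtain ⟨w, hw, hwmix⟩ := (hgood.and hmix').exists
  obtain ⟨k, hk⟩ := Metric.mem_closure_range_iff.1 (hSe ⟨⟨w, rfl⟩, (hw 0).2.1⟩) δ (by positivity)
  simp only [← l1LinftyPairing_apply] at hwmix
  refine not_tendsto_zero_of_le_abs (u := avgSub (T w) i₀) (c := (r : ℝ)⁻¹ - 2 * δ)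
    (fun n => lipschitzWith_one_l1LinftyPairing_coc (fun n => (hw n).1)
      (norm_supportIndicator_le _) n) (fun n => ?_) ?_ (hwmix k)
  · have hnear := hsδ (σ^[n] w) (hSe ⟨⟨_, rfl⟩, (hw n).2.1⟩)
    have hlow := inv_card_sub_le_abs_l1LinftyPairing_coc_avgSub
      (by rw [Fintype.card_fin]; omega) (fun n => (hw n).2.2) (heS (s (σ^[n] w))).2 n i₀
    rw [Fintype.card_fin] at hlow
    linarith
  · have hr0 : (0 : ℝ) < r := by positivity
    calc dist (avgSub (T w) i₀) (avgSub (e k) i₀) ≤ 2 * dist (T w) (e k) := dist_avgSub_le _ _ _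
      _ < 2 * δ := by linarith
      _ = (r : ℝ)⁻¹ - 2 * δ := by rw [hδ]; field_simp; ring

/-- If a Markov operator cocycle `(P,σ)` is asymptotically periodic with period
`r > 1`, then `(P,σ)` is not posterior mixing for inhomogeneous observables in
`B(Ω, L^∞(X,m))`. -/
theorem asymptotically_periodic_not_posterior_mixing_of_period_gt_one
    {X : Type*} [MeasurableSpace X] (m : Measure X) [IsProbabilityMeasure m]
    {Ω : Type*} [MeasurableSpace Ω] (Pr : Measure Ω) [IsProbabilityMeasure Pr]
    (σ : Ω → Ω) (hσ : MeasurePreserving σ Pr Pr)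
    (P : Ω → Module.End ℝ (Lp ℝ 1 m))
    (hP : ∀ᵐ ω ∂Pr, (∀ f : Lp ℝ 1 m, 0 ≤ f → 0 ≤ P ω f) ∧
      ∀ f : Lp ℝ 1 m, ∫ x, (P ω f) x ∂m = ∫ x, f x ∂m)
    (r : ℕ) (hr : 1 < r)
    (g : Fin r → Ω → Lp ℝ 1 m) (lam : Fin r → Ω → (Lp ℝ 1 m →L[ℝ] ℝ))
    (ρ : Ω → Equiv.Perm (Fin r))
    (hgmeas : ∀ i, StronglyMeasurable (g i))
    (hdens : ∀ᵐ ω ∂Pr, ∀ i, 0 ≤ g i ω ∧ ∫ x, (g i ω) x ∂m = 1)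
    (hdisj : ∀ᵐ ω ∂Pr, ∀ i j, i ≠ j → g i ω ⊓ g j ω = 0)
    (hperm : ∀ᵐ ω ∂Pr, ∀ i, P ω (g i ω) = g (ρ ω i) (σ ω))
    (hconv : ∀ᵐ ω ∂Pr, ∀ f : Lp ℝ 1 m,
      Tendsto (fun n => ‖coc P σ n ω (f - ∑ i, lam i ω f • g i ω)‖) atTop (𝓝 0)) :
    ¬ (∀ (f : Lp ℝ 1 m), ∫ x, f x ∂m = 0 →
        ∀ (G : Ω → Lp ℝ ⊤ m), StronglyMeasurable G → (∃ C : ℝ, ∀ ω, ‖G ω‖ ≤ C) →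
          ∀ᵐ ω ∂Pr,
            Tendsto (fun n => ∫ x, (coc P σ n ω f) x * (G (σ^[n] ω)) x ∂m)
              atTop (𝓝 0)) :=
  asymptotically_periodic_not_posterior_mixing_of_period_gt_one_general m Pr σ hσ P hP r hr g ρ
    hgmeas hdens hdisj hperm
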